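/- arXiv:2206.13576 — 2 statements merged into one kernel-verified Lean document; each statement's English description precedes it below -/
import Mathlib

section
/- Under the factorized-metric consistency conditions, each product Λ_k = Z_k Z_{k−1} ⋯ Z_2 Z_1 (1 ≤ k ≤ N) is quasi-Hermitian with respect to the full metric Θ_N = Z_N Z_{N−1} ⋯ Z_1, i.e., Λ_k† Θ_N = Θ_N Λ_k. -/
/-!
Write `Θ = P_k Λ_k` with `P_k = Z_N ⋯ Z_{k+1}`. Each consistency condition `Z_iᴴ P_i = P_i Z_i`
(for `i = N` the Hermiticity of `Z_N`, as `P_N = 1`) lets one factor `Z_iᴴ` be absorbed into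
`P_i`, turning it into `P_{i-1}`; peeling `Λ_kᴴ = Z_1ᴴ ⋯ Z_kᴴ` from the right in this way gives
`Λ_kᴴ P_k = Θ`, hence `Λ_kᴴ Θ = Λ_kᴴ P_k Λ_k = Θ Λ_k`.
-/

open Matrix

/-- `prodDesc Z j N = Z_N * Z_{N-1} * ⋯ * Z_{j+1}` (descending indices). -/
noncomputable def prodDesc {n : ℕ} (Z : ℕ → Matrix (Fin n) (Fin n) ℂ) (j N : ℕ) :
    Matrix (Fin n) (Fin n) ℂ :=
  (((List.range' (j + 1) (N - j)).reverse).map Z).prod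

section

variable {n : ℕ} (Z : ℕ → Matrix (Fin n) (Fin n) ℂ)

theorem prodDesc_self (N : ℕ) : prodDesc Z N N = 1 := by
  simp [prodDesc]

theorem prodDesc_eq_prodDesc_succ_mul {j N : ℕ} (h : j < N) :
    prodDesc Z j N = prodDesc Z (j + 1) N * Z (j + 1) := by
  obtain ⟨m, hm⟩ : ∃ m, N - j = m + 1 := ⟨N - (j + 1), by omega⟩
  have hm' : N - (j + 1) = m := by omega
  simp [prodDesc, hm, hm', List.range'_succ]

theorem prodDesc_succ_right {j k : ℕ} (h : j ≤ k) :
    prodDesc Z j (k + 1) = Z (k + 1) * prodDesc Z j k := by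
  have hm : k + 1 - j = (k - j) + 1 := by omega
  have hlast : j + 1 + (k - j) = k + 1 := by omega
  simp [prodDesc, hm, List.range'_1_concat, hlast]

theorem prodDesc_mul_prodDesc {j k N : ℕ} (hjk : j ≤ k) (hkN : k ≤ N) :
    prodDesc Z k N * prodDesc Z j k = prodDesc Z j N := by
  induction k, hjk using Nat.le_induction with
  | base => rw [prodDesc_self, mul_one]
  | succ k hjk ih =>
    rw [prodDesc_succ_right Z hjk, ← mul_assoc, ← prodDesc_eq_prodDesc_succ_mul Z hkN,
      ih (by omega)]

theorem conjTranspose_prodDesc_mul_prodDesc {j k N : ℕ} (hjk : j ≤ k) (hkN : k ≤ N)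
    (hcomm : ∀ i, j < i → i ≤ k → (Z i)ᴴ * prodDesc Z i N = prodDesc Z i N * Z i) :
    (prodDesc Z j k)ᴴ * prodDesc Z k N = prodDesc Z j N := by
  induction k, hjk using Nat.le_induction with
  | base => rw [prodDesc_self, conjTranspose_one, one_mul]
  | succ k hjk ih =>
    calc (prodDesc Z j (k + 1))ᴴ * prodDesc Z (k + 1) N
        = (prodDesc Z j k)ᴴ * ((Z (k + 1))ᴴ * prodDesc Z (k + 1) N) := by
          rw [prodDesc_succ_right Z hjk, conjTranspose_mul, mul_assoc]
      _ = (prodDesc Z j k)ᴴ * prodDesc Z k N := by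
          rw [hcomm (k + 1) (by omega) le_rfl, ← prodDesc_eq_prodDesc_succ_mul Z hkN]
      _ = prodDesc Z j N :=
          ih (by omega) fun i hji hik => hcomm i hji (by omega)

end

theorem lambdas_quasiHermitian
    {n N : ℕ} (Z : ℕ → Matrix (Fin n) (Fin n) ℂ)
    (hZN : (Z N)ᴴ = Z N)
    (hcons : ∀ k, 1 ≤ k → k ≤ N - 1 →
      (Z k)ᴴ * prodDesc Z k N = prodDesc Z k N * Z k) :
    ∀ k, 1 ≤ k → k ≤ N →
      (prodDesc Z 0 k)ᴴ * prodDesc Z 0 N = prodDesc Z 0 N * prodDesc Z 0 k := by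
  intro k _ hkN
  have hcomm : ∀ i, 0 < i → i ≤ k → (Z i)ᴴ * prodDesc Z i N = prodDesc Z i N * Z i := by
    intro i hi hik
    rcases (show i ≤ N by omega).lt_or_eq with _ | rfl
    · exact hcons i hi (by omega)
    · rw [prodDesc_self, mul_one, one_mul, hZN]
  calc (prodDesc Z 0 k)ᴴ * prodDesc Z 0 N
      = ((prodDesc Z 0 k)ᴴ * prodDesc Z k N) * prodDesc Z 0 k := by
        rw [← prodDesc_mul_prodDesc Z (Nat.zero_le k) hkN, mul_assoc]
    _ = prodDesc Z 0 N * prodDesc Z 0 k := by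
        rw [conjTranspose_prodDesc_mul_prodDesc Z (Nat.zero_le k) hkN hcomm]
end

section
/- A matrix H is quasi-Hermitian with respect to some positive-definite Hermitian Θ if and only if H is similar to a Hermitian matrix. -/
/-! A positive definite `Θ` factors as `Gᴴ * G` with `G` invertible, and for such a factorization
`Hᴴ * Θ = Θ * H` says exactly that `G * H * G⁻¹` is Hermitian. -/

open Matrix ComplexOrder

theorem isSelfAdjoint_units_conj_iff {R : Type*} [Monoid R] [StarMul R] (u : Rˣ) (h : R) :
    IsSelfAdjoint (u * h * ↑u⁻¹) ↔ star h * (star ↑u * u) = star ↑u * u * h := by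
  have hstar : star (u : R) * star ↑u⁻¹ = 1 := by rw [← star_mul, Units.inv_mul, star_one]
  have e1 : star (u : R) * star (↑u * h * ↑u⁻¹) * u = star h * (star ↑u * u) := by
    simp only [star_mul, ← mul_assoc, hstar, one_mul]
  have e2 : star (u : R) * (↑u * h * ↑u⁻¹) * u = star ↑u * u * h := by
    simp only [mul_assoc, Units.inv_mul, mul_one]
  rw [← e1, ← e2, IsSelfAdjoint, Units.mul_left_inj, ← Units.coe_star, Units.mul_right_inj]

namespace Matrix

variable {n : Type*} [Fintype n] [DecidableEq n]

theorem conjTranspose_conj_eq_iff {R : Type*} [CommRing R] [StarRing R] {G : Matrix n n R}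
    (hG : IsUnit G) (H : Matrix n n R) :
    (G * H * G⁻¹)ᴴ = G * H * G⁻¹ ↔ Hᴴ * (Gᴴ * G) = Gᴴ * G * H := by
  lift G to (Matrix n n R)ˣ using hG
  rw [← coe_units_inv]
  exact isSelfAdjoint_units_conj_iff G H

theorem eq_inv_mul_mul_iff {R : Type*} [CommRing R] {G : Matrix n n R} (hG : IsUnit G)
    {H K : Matrix n n R} : H = G⁻¹ * K * G ↔ K = G * H * G⁻¹ := by
  lift G to (Matrix n n R)ˣ using hG
  rw [← coe_units_inv]
  constructor <;> rintro rfl <;> simp [mul_assoc]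

open scoped MatrixOrder in
theorem posDef_iff_exists_isUnit_conjTranspose_mul_self {𝕜 : Type*} [RCLike 𝕜]
    {A : Matrix n n 𝕜} : A.PosDef ↔ ∃ G : Matrix n n 𝕜, IsUnit G ∧ A = Gᴴ * G := by
  rw [← isStrictlyPositive_iff_posDef]
  exact CStarAlgebra.isStrictlyPositive_iff_eq_star_mul_self

end Matrix

theorem quasiHermitian_iff_similar_hermitian
    {n : ℕ} (H : Matrix (Fin n) (Fin n) ℂ) :
    (∃ Θ : Matrix (Fin n) (Fin n) ℂ, Θ.PosDef ∧ Hᴴ * Θ = Θ * H) ↔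
      (∃ G K : Matrix (Fin n) (Fin n) ℂ, IsUnit G ∧ Kᴴ = K ∧ H = G⁻¹ * K * G) := by
  constructor
  · rintro ⟨Θ, hΘ, hcomm⟩
    obtain ⟨G, hG, rfl⟩ := posDef_iff_exists_isUnit_conjTranspose_mul_self.mp hΘ
    exact ⟨G, G * H * G⁻¹, hG, (conjTranspose_conj_eq_iff hG H).mpr hcomm,
      (eq_inv_mul_mul_iff hG).mpr rfl⟩
  · rintro ⟨G, K, hG, hK, hH⟩
    rw [(eq_inv_mul_mul_iff hG).mp hH] at hK
    exact ⟨Gᴴ * G, posDef_iff_exists_isUnit_conjTranspose_mul_self.mpr ⟨G, hG, rfl⟩,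
      (conjTranspose_conj_eq_iff hG H).mp hK⟩
end
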